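/- arXiv:0803.3285 — 2 statements merged into one kernel-verified Lean document; each statement's English description precedes it below -/
import Mathlib

section
/- A 2-SAT formula F is satisfiable if and only if for every variable x, there is no pair of directed paths in the implication digraph of F, one from the literal x to ¬x and one from ¬x to x. Equivalently, F is satisfiable iff its implication digraph contains no contradictory cycle. -/
/-- A literal is a variable index together with a polarity (`true` = positive). -/
abbrev Lit := ℕ × Bool

/-- Negation of a literal. -/
def litNeg (l : Lit) : Lit := (l.1, !l.2)

/-- A literal is satisfied by an assignment if the assigned value matches its polarity. -/
def litSat (σ : ℕ → Bool) (l : Lit) : Prop := σ l.1 = l.2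

/-- The edge relation of the implication digraph: for each clause `u ∨ v` of `F`,
edges `¬u → v` and `¬v → u`. -/
def impEdge (F : List (Lit × Lit)) (a b : Lit) : Prop :=
  ∃ c ∈ F, (a = litNeg c.1 ∧ b = c.2) ∨ (a = litNeg c.2 ∧ b = c.1)

/-- Reachability by a directed path in the implication digraph. -/
def impReach (F : List (Lit × Lit)) : Lit → Lit → Prop :=
  Relation.ReflTransGen (impEdge F)

/-- Type synonym for literals, preordered by reachability in the implication digraph. -/
def LitW (_F : List (Lit × Lit)) := Lit

instance (F : List (Lit × Lit)) : Preorder (LitW F) where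
  le a b := impReach F a b
  le_refl _ := Relation.ReflTransGen.refl
  le_trans _ _ _ h h' := Relation.ReflTransGen.trans h h'

/-- Embedding of literals into a linear extension of the reachability preorder. -/
noncomputable def litRank (F : List (Lit × Lit)) (l : Lit) :
    LinearExtension (Antisymmetrization (LitW F) (· ≤ ·)) :=
  toLinearExtension (toAntisymmetrization (α := LitW F) (· ≤ ·) l)

theorem litRank_mono {F : List (Lit × Lit)} {a b : Lit} (h : impReach F a b) :
    litRank F a ≤ litRank F b :=
  toLinearExtension.monotone (toAntisymmetrization_mono (α := LitW F) h)

theorem litRank_eq {F : List (Lit × Lit)} {a b : Lit} (h : litRank F a = litRank F b) :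
    impReach F a b ∧ impReach F b a := by
  have : toAntisymmetrization (α := LitW F) (· ≤ ·) a =
      toAntisymmetrization (α := LitW F) (· ≤ ·) b := h
  exact Quotient.exact this

/-- A 2-SAT formula (clauses on strongly distinct literals) is satisfiable iff its
implication digraph contains no contradictory cycle, i.e. no literal `u` with directed
paths from `u` to `¬u` and from `¬u` back to `u`. -/
theorem stmt_2 (F : List (Lit × Lit))
    (hdistinct : ∀ c ∈ F, c.1.1 ≠ c.2.1) :
    (∃ σ : ℕ → Bool, ∀ c ∈ F, litSat σ c.1 ∨ litSat σ c.2) ↔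
      ¬ ∃ u : Lit, impReach F u (litNeg u) ∧ impReach F (litNeg u) u := by
  classical
  constructor
  · rintro ⟨σ, hσ⟩ ⟨u, h1, h2⟩
    -- satisfaction is preserved along edges, hence along reachability
    have step : ∀ a b : Lit, impEdge F a b → litSat σ a → litSat σ b := by
      rintro a b ⟨c, hc, hab⟩ ha
      rcases hσ c hc with h | h
      · rcases hab with ⟨rfl, rfl⟩ | ⟨rfl, rfl⟩
        · exfalso
          simp [litSat, litNeg] at ha
          simp [litSat, ha] at h
        · exact h
      · rcases hab with ⟨rfl, rfl⟩ | ⟨rfl, rfl⟩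
        · exact h
        · exfalso
          simp [litSat, litNeg] at ha
          simp [litSat, ha] at h
    have pres : ∀ a b : Lit, impReach F a b → litSat σ a → litSat σ b := by
      intro a b h
      induction h with
      | refl => exact id
      | tail _ e ih => exact fun ha => step _ _ e (ih ha)
    have : litSat σ u ∨ litSat σ (litNeg u) := by
      unfold litSat litNeg
      cases hσu : σ u.1 <;> cases hu : u.2 <;> simp
    rcases this with h | h
    · have h' := pres _ _ h1 h
      simp [litSat, litNeg] at h h'
      rw [h] at h'
      exact (Bool.not_ne_self _ h'.symm).elim
    · have h' := pres _ _ h2 h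
      simp [litSat, litNeg] at h h'
      rw [h'] at h
      exact (Bool.not_ne_self _ h.symm).elim
  · intro hno
    push_neg at hno
    -- no literal is equivalent to its negation
    have hne : ∀ l : Lit, litRank F l ≠ litRank F (litNeg l) := by
      intro l h
      obtain ⟨h1, h2⟩ := litRank_eq h
      exact hno l h1 h2
    set σ : ℕ → Bool := fun x =>
      if litRank F (x, false) < litRank F (x, true) then true else false with hσdef
    have hx : ∀ x : ℕ, (σ x = true ↔ litRank F (x, false) < litRank F (x, true)) :=
      fun x => by simp [hσdef]
    have key : ∀ l : Lit, litSat σ l ↔ litRank F (litNeg l) < litRank F l := by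
      rintro ⟨x, b⟩
      cases b
      · show σ x = false ↔ litRank F (x, !false) < litRank F (x, false)
        have hne' : litRank F (x, true) ≠ litRank F (x, false) :=
          fun h => (hne (x, false)) h.symm
        constructor
        · intro hs
          have hnlt : ¬ litRank F (x, false) < litRank F (x, true) := fun hlt => by
            rw [(hx x).2 hlt] at hs; exact Bool.noConfusion hs
          exact lt_of_le_of_ne (le_of_not_gt hnlt) hne'
        · intro hlt
          cases hv : σ x with
          | false => rfl
          | true => exact absurd ((hx x).1 hv) (lt_asymm hlt)
      · show σ x = true ↔ litRank F (x, !true) < litRank F (x, true)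
        exact hx x
    refine ⟨σ, fun c hc => ?_⟩
    by_contra hcon
    push_neg at hcon
    obtain ⟨h1, h2⟩ := hcon
    rw [key] at h1 h2
    -- not litSat means the rank of the literal is below its negation
    have hlt1 : litRank F c.1 < litRank F (litNeg c.1) :=
      lt_of_le_of_ne (le_of_not_gt h1) (hne c.1)
    have hlt2 : litRank F c.2 < litRank F (litNeg c.2) :=
      lt_of_le_of_ne (le_of_not_gt h2) (hne c.2)
    have e1 : impReach F (litNeg c.1) c.2 :=
      Relation.ReflTransGen.single ⟨c, hc, Or.inl ⟨rfl, rfl⟩⟩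
    have e2 : impReach F (litNeg c.2) c.1 :=
      Relation.ReflTransGen.single ⟨c, hc, Or.inr ⟨rfl, rfl⟩⟩
    exact absurd ((hlt1.trans_le (litRank_mono e1)).trans (hlt2.trans_le (litRank_mono e2)))
      (lt_irrefl _)
end

section
/- If a 2-SAT formula is unsatisfiable, then its implication digraph contains a hooked chain of length at least 3; that is, there exist pairwise strongly distinct literals y₁,…,y_s with s ≥ 2 and literals u, v ∈ {y₁,…,y_s, ¬y₁,…,¬y_s} such that the digraph contains the directed path u → y₁ → y₂ → ⋯ → y_s → v. -/
lemma litNeg_litNeg (l : Lit) : litNeg (litNeg l) = l := by simp [litNeg]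

lemma litNeg_fst (l : Lit) : (litNeg l).1 = l.1 := rfl

lemma impEdge_neg {F : List (Lit × Lit)} {a b : Lit} (h : impEdge F a b) :
    impEdge F (litNeg b) (litNeg a) := by
  obtain ⟨c, hc, h | h⟩ := h
  · exact ⟨c, hc, Or.inr ⟨by rw [h.2], by rw [h.1, litNeg_litNeg]⟩⟩
  · exact ⟨c, hc, Or.inl ⟨by rw [h.2], by rw [h.1, litNeg_litNeg]⟩⟩

lemma reach_neg {F : List (Lit × Lit)} {a b : Lit}
    (h : Relation.ReflTransGen (impEdge F) a b) :
    Relation.ReflTransGen (impEdge F) (litNeg b) (litNeg a) := by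
  induction h with
  | refl => exact .refl
  | tail _ he ih => exact Relation.ReflTransGen.head (impEdge_neg he) ih

lemma impEdge_ne {F : List (Lit × Lit)} (hd : ∀ c ∈ F, c.1.1 ≠ c.2.1)
    {a b : Lit} (h : impEdge F a b) : a.1 ≠ b.1 := by
  obtain ⟨c, hc, h | h⟩ := h
  · rw [h.1, h.2, litNeg_fst]; exact hd c hc
  · rw [h.1, h.2, litNeg_fst]; exact (hd c hc).symm

lemma buildS (F : List (Lit × Lit))
    (H : ∀ a : Lit, ¬ Relation.ReflTransGen (impEdge F) a (litNeg a) ∨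
      ¬ Relation.ReflTransGen (impEdge F) (litNeg a) a)
    (vs : List ℕ) :
    ∃ S : Set Lit,
      (∀ l ∈ S, litNeg l ∉ S) ∧
      (∀ a ∈ S, ∀ b, impEdge F a b → b ∈ S) ∧
      (∀ x ∈ vs, (x, true) ∈ S ∨ (x, false) ∈ S) := by
  induction vs with
  | nil => exact ⟨∅, by simp, by simp, by simp⟩
  | cons x vs ih =>
    obtain ⟨S, hcons, hcl, hcomp⟩ := ih
    have hclR : ∀ a ∈ S, ∀ b, Relation.ReflTransGen (impEdge F) a b → b ∈ S := by
      intro a ha b h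
      induction h with
      | refl => exact ha
      | tail _ he ih2 => exact hcl _ ih2 _ he
    by_cases hx : (x, true) ∈ S ∨ (x, false) ∈ S
    · refine ⟨S, hcons, hcl, ?_⟩
      intro y hy
      rcases List.mem_cons.mp hy with rfl | hy
      · exact hx
      · exact hcomp y hy
    · push_neg at hx
      obtain ⟨b, hb⟩ : ∃ b : Bool, ¬ Relation.ReflTransGen (impEdge F) (x, b) (litNeg (x, b)) := by
        rcases H (x, true) with h | h
        · exact ⟨true, h⟩
        · exact ⟨false, by simpa [litNeg] using h⟩
      refine ⟨S ∪ {l | Relation.ReflTransGen (impEdge F) (x, b) l}, ?_, ?_, ?_⟩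
      · rintro l (hl | hl) hnl
        · rcases hnl with hnl | hnl
          · exact hcons l hl hnl
          · have := hclR _ hl _ (by simpa [litNeg_litNeg] using reach_neg hnl)
            cases b
            · simpa [litNeg] using hx.1 this
            · simpa [litNeg] using hx.2 this
        · rcases hnl with hnl | hnl
          · have := hclR _ hnl _ (reach_neg hl)
            cases b
            · simpa [litNeg] using hx.1 this
            · simpa [litNeg] using hx.2 this
          · have h1 : Relation.ReflTransGen (impEdge F) l (litNeg (x, b)) := by
              simpa [litNeg_litNeg] using reach_neg hnl
            exact hb (Relation.ReflTransGen.trans hl h1)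
      · rintro a (ha | ha) c hac
        · exact Or.inl (hcl _ ha _ hac)
        · exact Or.inr (Relation.ReflTransGen.tail ha hac)
      · intro y hy
        rcases List.mem_cons.mp hy with rfl | hy
        · cases b
          · exact Or.inr (Or.inr Relation.ReflTransGen.refl)
          · exact Or.inl (Or.inr Relation.ReflTransGen.refl)
        · rcases hcomp y hy with h | h
          · exact Or.inl (Or.inl h)
          · exact Or.inr (Or.inl h)

lemma exists_contra (F : List (Lit × Lit))
    (hunsat : ¬ ∃ σ : ℕ → Bool, ∀ c ∈ F, litSat σ c.1 ∨ litSat σ c.2) :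
    ∃ a : Lit, Relation.ReflTransGen (impEdge F) a (litNeg a) ∧
      Relation.ReflTransGen (impEdge F) (litNeg a) a := by
  classical
  by_contra h
  rw [not_exists] at h
  have H : ∀ a : Lit, ¬ Relation.ReflTransGen (impEdge F) a (litNeg a) ∨
      ¬ Relation.ReflTransGen (impEdge F) (litNeg a) a := fun a => not_and_or.mp (h a)
  obtain ⟨S, hcons, hcl, hcomp⟩ :=
    buildS F H (F.map (fun c => c.1.1) ++ F.map (fun c => c.2.1))
  apply hunsat
  refine ⟨fun x => if (x, true) ∈ S then true else false, ?_⟩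
  intro c hc
  by_contra hcc
  push_neg at hcc
  obtain ⟨h1, h2⟩ := hcc
  have hvar : ∀ l : Lit, (l.1 ∈ F.map (fun c => c.1.1) ++ F.map (fun c => c.2.1)) →
      ¬ litSat (fun x => if (x, true) ∈ S then true else false) l → litNeg l ∈ S := by
    intro l hmem hns
    rcases hcomp l.1 hmem with hS | hS
    · have hb2 : l.2 = false := by
        simp only [litSat] at hns
        rw [if_pos hS] at hns
        cases hl2 : l.2
        · rfl
        · exact absurd hl2.symm hns
      have he : litNeg l = (l.1, true) := by simp [litNeg, hb2]
      rw [he]; exact hS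
    · have hnt : (l.1, true) ∉ S := by
        have := hcons _ hS
        simpa [litNeg] using this
      have hb2 : l.2 = true := by
        simp only [litSat] at hns
        rw [if_neg hnt] at hns
        cases hl2 : l.2
        · exact absurd hl2.symm hns
        · rfl
      have he : litNeg l = (l.1, false) := by simp [litNeg, hb2]
      rw [he]; exact hS
  have m1 : litNeg c.1 ∈ S :=
    hvar c.1 (List.mem_append_left _ (List.mem_map.mpr ⟨c, hc, rfl⟩)) h1
  have m2 : litNeg c.2 ∈ S :=
    hvar c.2 (List.mem_append_right _ (List.mem_map.mpr ⟨c, hc, rfl⟩)) h2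
  have e1 : impEdge F (litNeg c.1) c.2 := ⟨c, hc, Or.inl ⟨rfl, rfl⟩⟩
  exact hcons _ (hcl _ m1 _ e1) m2

lemma reach_fun {F : List (Lit × Lit)} {a b : Lit}
    (h : Relation.ReflTransGen (impEdge F) a b) :
    ∃ n, ∃ w : ℕ → Lit, w 0 = a ∧ w n = b ∧ ∀ i < n, impEdge F (w i) (w (i+1)) := by
  induction h with
  | refl => exact ⟨0, fun _ => a, rfl, rfl, fun i hi => absurd hi (by omega)⟩
  | @tail b c _ he ih =>
    obtain ⟨n, w, h0, hn, hw⟩ := ih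
    refine ⟨n + 1, fun i => if i ≤ n then w i else c, ?_, ?_, ?_⟩
    · simpa using h0
    · simp
    · intro i hi
      by_cases hin : i < n
      · simpa [Nat.le_of_lt hin, show i + 1 ≤ n by omega] using hw i hin
      · have : i = n := by omega
        subst this
        simpa [hn, show ¬ (i + 1 ≤ i) by omega] using he

lemma findGreatest_congr {P Q : ℕ → Prop} [DecidablePred P] [DecidablePred Q]
    (h : ∀ n, P n ↔ Q n) (n : ℕ) : Nat.findGreatest P n = Nat.findGreatest Q n := by
  induction n with
  | zero => rfl
  | succ n ih =>
    rw [Nat.findGreatest_succ, Nat.findGreatest_succ, ih]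
    by_cases hp : P (n + 1)
    · rw [if_pos hp, if_pos ((h _).mp hp)]
    · rw [if_neg hp, if_neg (fun hq => hp ((h _).mpr hq))]

lemma same_var {l m : Lit} (h : l.1 = m.1) : l = m ∨ l = litNeg m := by
  rcases l with ⟨x, bl⟩; rcases m with ⟨x2, bm⟩
  dsimp at h; subst h
  cases bl <;> cases bm <;> simp [litNeg]

/-- If a 2-SAT formula (clauses on strongly distinct literals) is unsatisfiable, then
its implication digraph contains a hooked chain of length at least 3: there are
pairwise strongly distinct literals `y 0, …, y (s-1)` with `s ≥ 2` and literals
`u, v ∈ {y i, ¬ y i}` such that the directed path `u → y 0 → ⋯ → y (s-1) → v`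
is present. -/
theorem stmt_3 (F : List (Lit × Lit))
    (hdistinct : ∀ c ∈ F, c.1.1 ≠ c.2.1)
    (hunsat : ¬ ∃ σ : ℕ → Bool, ∀ c ∈ F, litSat σ c.1 ∨ litSat σ c.2) :
    ∃ (s : ℕ) (y : ℕ → Lit) (u v : Lit),
      2 ≤ s ∧
      (∀ i < s, ∀ j < s, i ≠ j → (y i).1 ≠ (y j).1) ∧
      (∃ i < s, u = y i ∨ u = litNeg (y i)) ∧
      (∃ i < s, v = y i ∨ v = litNeg (y i)) ∧
      impEdge F u (y 0) ∧
      (∀ i, i + 1 < s → impEdge F (y i) (y (i + 1))) ∧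
      impEdge F (y (s - 1)) v := by
  classical
  obtain ⟨a, h1, h2⟩ := exists_contra F hunsat
  obtain ⟨n1, w1, w10, w1n, hw1⟩ := reach_fun h1
  obtain ⟨n2, w2, w20, w2n, hw2⟩ := reach_fun h2
  have hane : a ≠ litNeg a := by
    intro h
    have := congrArg Prod.snd h
    simp [litNeg] at this
  have hn1 : 2 ≤ n1 := by
    rcases n1 with _ | _ | n
    · exact absurd (w10.symm.trans w1n) hane
    · have h := impEdge_ne hdistinct (hw1 0 (by omega))
      rw [w10, w1n] at h
      exact absurd (litNeg_fst a).symm h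
    · omega
  have hn2 : 2 ≤ n2 := by
    rcases n2 with _ | _ | n
    · exact absurd (w20.symm.trans w2n).symm hane
    · have h := impEdge_ne hdistinct (hw2 0 (by omega))
      rw [w20, w2n] at h
      exact absurd (litNeg_fst a) h
    · omega
  set p := n1 + n2 with hpdef
  have hppos : 0 < p := by omega
  set z : ℕ → Lit := fun i => if i % p < n1 then w1 (i % p) else w2 (i % p - n1) with hzdef
  have zmod : ∀ i, z i = z (i % p) := by
    intro i
    simp only [hzdef]
    rw [Nat.mod_eq_of_lt (Nat.mod_lt i hppos)]
  have hz0 : z 0 = a := by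
    simp only [hzdef]
    rw [Nat.zero_mod, if_pos (by omega)]
    exact w10
  have hzn1 : z n1 = litNeg a := by
    simp only [hzdef]
    rw [Nat.mod_eq_of_lt (by omega : n1 < p), if_neg (by omega), Nat.sub_self]
    exact w20
  have hedge : ∀ i, impEdge F (z i) (z (i + 1)) := by
    intro i
    have hrp : i % p < p := Nat.mod_lt i hppos
    have h1p : (i + 1) % p = (i % p + 1) % p := by
      conv_lhs => rw [Nat.add_mod]
      rw [Nat.mod_eq_of_lt (by omega : 1 < p)]
    by_cases hend : i % p + 1 = p
    · have hz1 : z (i + 1) = a := by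
        rw [zmod (i + 1), h1p, hend, Nat.mod_self, hz0]
      have hzi : z i = w2 (i % p - n1) := by
        simp only [hzdef]
        rw [if_neg (by omega)]
      rw [hzi, hz1]
      have h := hw2 (i % p - n1) (by omega)
      rw [show i % p - n1 + 1 = n2 by omega, w2n] at h
      exact h
    · have h1r : (i + 1) % p = i % p + 1 := by
        rw [h1p, Nat.mod_eq_of_lt (by omega)]
      by_cases hc : i % p < n1
      · have hzi : z i = w1 (i % p) := by
          simp only [hzdef]
          rw [if_pos hc]
        have hz1 : z (i + 1) = w1 (i % p + 1) := by
          simp only [hzdef, h1r]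
          by_cases hc2 : i % p + 1 < n1
          · rw [if_pos hc2]
          · rw [if_neg hc2]
            have he : i % p + 1 = n1 := by omega
            rw [he, Nat.sub_self, w20, w1n]
        rw [hzi, hz1]
        exact hw1 _ hc
      · have hzi : z i = w2 (i % p - n1) := by
          simp only [hzdef]
          rw [if_neg hc]
        have hz1 : z (i + 1) = w2 (i % p + 1 - n1) := by
          simp only [hzdef, h1r]
          rw [if_neg (by omega)]
        rw [hzi, hz1, show i % p + 1 - n1 = (i % p - n1) + 1 by omega]
        exact hw2 _ (by omega)
  have hzp : ∀ x, z (p + x) = z x := by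
    intro x
    rw [zmod (p + x), Nat.add_comm, Nat.add_mod_right, ← zmod]
  set good : ℕ → ℕ → Prop :=
    fun i s => ∀ x < s, ∀ y < s, x ≠ y → (z (i + x)).1 ≠ (z (i + y)).1 with hgooddef
  have hgood2 : ∀ i, good i 2 := by
    intro i x hx y hy hxy
    have h01 := impEdge_ne hdistinct (hedge i)
    interval_cases x <;> interval_cases y <;>
      first
        | exact absurd rfl hxy
        | simpa using h01
        | simpa using h01.symm
  set f : ℕ → ℕ := fun i => Nat.findGreatest (good i) p with hfdef
  have hnogoodp : ∀ i, ¬ good i p := by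
    intro i hg
    have hrp : i % p < p := Nat.mod_lt i hppos
    obtain ⟨t1, ht1lt, ht1⟩ : ∃ t1 < p, (i + t1) % p = 0 := by
      by_cases h0 : i % p = 0
      · exact ⟨0, by omega, by rw [Nat.add_zero, h0]⟩
      · refine ⟨p - i % p, by omega, ?_⟩
        rw [show i + (p - i % p) = p * (i / p) + p by
          have := Nat.mod_add_div i p; omega]
        rw [Nat.add_mod_right, Nat.mul_mod_right]
    obtain ⟨t2, ht2lt, ht2⟩ : ∃ t2 < p, (i + t2) % p = n1 := by
      by_cases h0 : i % p ≤ n1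
      · refine ⟨n1 - i % p, by omega, ?_⟩
        rw [show i + (n1 - i % p) = p * (i / p) + n1 by
          have := Nat.mod_add_div i p; omega]
        rw [Nat.mul_add_mod, Nat.mod_eq_of_lt (by omega)]
      · refine ⟨p + n1 - i % p, by omega, ?_⟩
        rw [show i + (p + n1 - i % p) = p * (i / p) + (n1 + p) by
          have := Nat.mod_add_div i p; omega]
        rw [Nat.mul_add_mod, Nat.add_mod_right, Nat.mod_eq_of_lt (by omega)]
    have htne : t1 ≠ t2 := by
      intro h
      rw [h, ht2] at ht1
      omega
    have := hg t1 ht1lt t2 ht2lt htne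
    rw [zmod (i + t1), ht1, hz0, zmod (i + t2), ht2, hzn1] at this
    exact this (litNeg_fst a).symm
  have hf2 : ∀ i, 2 ≤ f i := fun i => Nat.le_findGreatest (by omega) (hgood2 i)
  have hfgood : ∀ i, good i (f i) := fun i =>
    Nat.findGreatest_spec (by omega : 2 ≤ p) (hgood2 i)
  have hfp : ∀ i, f i + 1 ≤ p := by
    intro i
    have h1 : f i ≤ p := Nat.findGreatest_le p
    rcases eq_or_lt_of_le h1 with he | h2
    · exact absurd (he ▸ hfgood i) (hnogoodp i)
    · omega
  have hfper : f 0 = f p := by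
    apply findGreatest_congr
    intro s
    constructor <;> intro hg x hx y hy hxy
    · have h3 := hg x hx y hy hxy
      simp only [Nat.zero_add] at h3
      rw [← hzp x, ← hzp y] at h3
      exact h3
    · have h3 := hg x hx y hy hxy
      rw [hzp x, hzp y] at h3
      simpa using h3
  obtain ⟨i0, hi0mem, hi0max⟩ :=
    Finset.exists_max_image (Finset.Icc 1 p) f ⟨1, Finset.mem_Icc.mpr (by omega)⟩
  obtain ⟨hi01, hi0p⟩ := Finset.mem_Icc.mp hi0mem
  have hprev : f (i0 - 1) ≤ f i0 := by
    rcases Nat.eq_or_lt_of_le hi01 with h | h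
    · subst h
      have hm := hi0max p (Finset.mem_Icc.mpr (by omega))
      rw [show (1:ℕ) - 1 = 0 by rfl, hfper]
      exact hm
    · exact hi0max _ (Finset.mem_Icc.mpr (by omega))
  set s := f i0 with hsdef
  have hgs : good i0 s := hfgood i0
  have hs2 : 2 ≤ s := hf2 i0
  have hsp : s + 1 ≤ p := hfp i0
  refine ⟨s, fun k => z (i0 + k), z (i0 - 1), z (i0 + s), hs2, ?_, ?_, ?_, ?_, ?_, ?_⟩
  · exact fun i hi j hj hij => hgs i hi j hj hij
  · -- hook for u
    have hnog : ¬ good (i0 - 1) (s + 1) := by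
      intro hg
      have h5 := Nat.le_findGreatest hsp hg
      have h4 : Nat.findGreatest (good (i0 - 1)) p = f (i0 - 1) := rfl
      omega
    simp only [hgooddef, not_forall] at hnog
    obtain ⟨x, hx, y, hy, hxy, hvv⟩ := hnog
    push_neg at hvv
    have key : ∃ c < s, (z (i0 - 1)).1 = (z (i0 + c)).1 := by
      rcases Nat.eq_zero_or_pos x with rfl | hx0
      · refine ⟨y - 1, by omega, ?_⟩
        rw [show i0 + (y - 1) = i0 - 1 + y by omega]
        simpa using hvv
      · rcases Nat.eq_zero_or_pos y with rfl | hy0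
        · refine ⟨x - 1, by omega, ?_⟩
          rw [show i0 + (x - 1) = i0 - 1 + x by omega]
          simpa using hvv.symm
        · exfalso
          refine hgs (x - 1) (by omega) (y - 1) (by omega) (by omega) ?_
          rw [show i0 + (x - 1) = i0 - 1 + x by omega,
            show i0 + (y - 1) = i0 - 1 + y by omega]
          exact hvv
    obtain ⟨c, hc, hcv⟩ := key
    exact ⟨c, hc, same_var hcv⟩
  · -- hook for v
    have hnog : ¬ good i0 (s + 1) := by
      intro hg
      have h5 := Nat.le_findGreatest hsp hg
      have h4 : Nat.findGreatest (good i0) p = f i0 := rfl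
      omega
    simp only [hgooddef, not_forall] at hnog
    obtain ⟨x, hx, y, hy, hxy, hvv⟩ := hnog
    push_neg at hvv
    have key : ∃ c < s, (z (i0 + s)).1 = (z (i0 + c)).1 := by
      rcases Nat.lt_or_ge x s with hx0 | hx0
      · rcases Nat.lt_or_ge y s with hy0 | hy0
        · exact absurd hvv (hgs x hx0 y hy0 hxy)
        · have : y = s := by omega
          subst this
          exact ⟨x, hx0, hvv.symm⟩
      · have : x = s := by omega
        subst this
        have hys : y < s := by omega
        exact ⟨y, hys, hvv⟩
    obtain ⟨c, hc, hcv⟩ := key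
    exact ⟨c, hc, same_var hcv⟩
  · have h := hedge (i0 - 1)
    rw [show i0 - 1 + 1 = i0 from by omega] at h
    simpa using h
  · intro i hi
    have h := hedge (i0 + i)
    rw [show i0 + i + 1 = i0 + (i + 1) from by omega] at h
    exact h
  · have h := hedge (i0 + (s - 1))
    rw [show i0 + (s - 1) + 1 = i0 + s from by omega] at h
    exact h
end
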